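/- Every cactus graph G is z-monotonic and b*-monotonic: for every induced subgraph H_1 of G and every induced subgraph H_2 of H_1 (both with at least one vertex), z(H_2) ≤ z(H_1) and b*(H_2) ≤ b*(H_1). -/

import Mathlib

variable {V : Type*} {W : Type*}

/-- A proper coloring of `G` using colors `{1, …, k}`: colors lie in `{1,…,k}`,
adjacent vertices get different colors, and every color in `{1,…,k}` is used. -/
def IsProperKColoring (G : SimpleGraph V) (k : ℕ) (c : V → ℕ) : Prop :=
  (∀ v, c v ∈ Set.Icc 1 k) ∧
  (∀ u v, G.Adj u v → c u ≠ c v) ∧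
  (∀ j ∈ Set.Icc 1 k, ∃ v, c v = j)

/-- `u` is a b-vertex: every color `j ∈ {1,…,k}` with `j ≠ c u` appears on a neighbor of `u`. -/
def IsBVertex (G : SimpleGraph V) (k : ℕ) (c : V → ℕ) (u : V) : Prop :=
  ∀ j ∈ Set.Icc 1 k, j ≠ c u → ∃ w, G.Adj u w ∧ c w = j

/-- `u` is a nice vertex: it is a b-vertex and for every color `j ≠ c u` in `{1,…,k}`
it has a b-vertex neighbor of color `j`. -/
def IsNiceVertex (G : SimpleGraph V) (k : ℕ) (c : V → ℕ) (u : V) : Prop :=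
  IsBVertex G k c u ∧
  ∀ j ∈ Set.Icc 1 k, j ≠ c u → ∃ w, G.Adj u w ∧ c w = j ∧ IsBVertex G k c w

/-- A Grundy coloring using `k` colors: proper, and every vertex of color `j` has a
neighbor of each smaller color `i ≥ 1`. -/
def IsGrundyColoring (G : SimpleGraph V) (k : ℕ) (c : V → ℕ) : Prop :=
  IsProperKColoring G k c ∧
  ∀ i j : ℕ, 1 ≤ i → i < j → j ≤ k → ∀ v, c v = j → ∃ w, G.Adj v w ∧ c w = i

/-- A z-coloring: a Grundy coloring with a nice vertex of (top) color `k`. -/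
def IsZColoring (G : SimpleGraph V) (k : ℕ) (c : V → ℕ) : Prop :=
  IsGrundyColoring G k c ∧ ∃ u, c u = k ∧ IsNiceVertex G k c u

/-- A b*-coloring: a proper coloring with a nice vertex of (top) color `k`. -/
def IsBStarColoring (G : SimpleGraph V) (k : ℕ) (c : V → ℕ) : Prop :=
  IsProperKColoring G k c ∧ ∃ u, c u = k ∧ IsNiceVertex G k c u

/-- The z-chromatic number: largest `k` admitting a z-coloring with `k` colors. -/
noncomputable def zNum (G : SimpleGraph V) : ℕ :=
  sSup {k | ∃ c : V → ℕ, IsZColoring G k c}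

/-- The b*-chromatic number: largest `k` admitting a b*-coloring with `k` colors. -/
noncomputable def bStar (G : SimpleGraph V) : ℕ :=
  sSup {k | ∃ c : V → ℕ, IsBStarColoring G k c}

/-- `m*(G)`: the largest `k` such that some vertex `u` has `k` distinct neighbors,
each of degree at least `k`. -/
noncomputable def mStar (G : SimpleGraph V) : ℕ :=
  sSup {k | ∃ (u : V) (s : Finset V), (↑s : Set V) ⊆ G.neighborSet u ∧ s.card = k ∧
    ∀ v ∈ s, k ≤ (G.neighborSet v).ncard}

/-- The clique number `ω(G)`. -/
noncomputable def omegaNum (G : SimpleGraph V) : ℕ :=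
  sSup {n | ∃ s : Finset V, G.IsNClique n s}
/-- A cactus: a connected graph in which any two distinct cycles (cycles with
different edge sets) share at most one vertex. -/
def IsCactus (G : SimpleGraph V) : Prop :=
  G.Connected ∧
  ∀ (u v : V) (p : G.Walk u u) (q : G.Walk v v), p.IsCycle → q.IsCycle →
    {e | e ∈ p.edges} ≠ {e | e ∈ q.edges} →
    ({a | a ∈ p.support} ∩ {a | a ∈ q.support}).Subsingleton

/-!
It suffices to add one vertex `v` to `s`, turning a z- (or b*-) colouring of `G[s]` with `k`
colours into one of `G[s ∪ {v}]` with at least `k` colours.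

For `k ≥ 3`, keep the colouring on the component `C` of a nice vertex `u` in `G[s]`; this
preserves the nice vertex and everything it witnesses. All other vertices are recoloured
first-fit, `v` first. In a cactus, `v` has at most two neighbours in `C` (three would give two
cycles through `v` sharing another vertex), and every finite vertex set has a vertex other than
`v` with at most two neighbours in it (an end of a maximal path). So first-fit needs at most
`3 ≤ k` colours, and it creates only Grundy vertices.

For `k ≤ 2`, `G[s]` is bipartite. Either `G[s ∪ {v}]` is still 2-colourable, or `v` has
neighbours of both colours in one component of `G[s]`; giving `v` colour 3 then yields a
z-colouring with 3 colours.
-/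

open SimpleGraph Set

variable {G : SimpleGraph V}

lemma SimpleGraph.Walk.IsPath.isCycle_cons_concat {u v w : V} {p : G.Walk v w} (hp : p.IsPath)
    (hvw : v ≠ w) (hu : u ∉ p.support) (huv : G.Adj u v) (hwu : G.Adj w u) :
    (Walk.cons huv (p.concat hwu)).IsCycle := by
  refine (Walk.cons_isCycle_iff _ huv).2 ⟨hp.concat hu hwu, ?_⟩
  rw [Walk.edges_concat, List.concat_eq_append, List.mem_append, List.mem_singleton, Sym2.eq_iff]
  rintro (h | ⟨rfl, -⟩ | ⟨-, rfl⟩)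
  · exact hu (p.fst_mem_support_of_mem_edges h)
  · exact hu p.end_mem_support
  · exact hvw rfl

theorem IsCactus.ncard_inter_neighborSet_le_two [Finite V] (hc : IsCactus G) {v : V} {C : Set V}
    (hC : ∀ x ∈ C, ∀ y ∈ C, ∃ p : G.Walk x y, v ∉ p.support) :
    (C ∩ G.neighborSet v).ncard ≤ 2 := by
  classical
  by_contra! h
  obtain ⟨w₁, w₂, w₃, ⟨hw₁, h₁⟩, ⟨hw₂, h₂⟩, ⟨hw₃, h₃⟩, h₁₂, h₁₃, h₂₃⟩ := (two_lt_ncard_iff).1 h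
  rw [mem_neighborSet] at h₁ h₂ h₃
  obtain ⟨p, hp⟩ := hC w₁ hw₁ w₂ hw₂
  obtain ⟨q, hq⟩ := hC w₂ hw₂ w₃ hw₃
  set C₁ := Walk.cons h₁ (p.toPath.val.concat h₂.symm)
  set C₂ := Walk.cons h₂ (q.toPath.val.concat h₃.symm)
  have hC₁ : C₁.IsCycle := p.toPath.2.isCycle_cons_concat h₁₂
    (fun h => hp (p.support_toPath_subset_support h)) h₁ h₂.symm
  have hC₂ : C₂.IsCycle := q.toPath.2.isCycle_cons_concat h₂₃
    (fun h => hq (q.support_toPath_subset_support h)) h₂ h₃.symm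
  -- the edge `vw₁` lies on the first cycle only
  have hne : {e | e ∈ C₁.edges} ≠ {e | e ∈ C₂.edges} := by
    intro heq
    have : s(v, w₁) ∈ C₂.edges := (Set.ext_iff.1 heq _).1 (by simp [C₁])
    simp only [C₂, Walk.edges_cons, Walk.edges_concat, List.concat_eq_append, List.mem_cons,
      List.mem_append, Sym2.eq_iff, true_and, List.not_mem_nil, or_false] at this
    rcases this with (rfl | ⟨h, -⟩) | h | ⟨h, -⟩ | rfl
    · exact h₁₂ rfl
    · exact h₂.ne h
    · exact hq (q.support_toPath_subset_support (q.toPath.val.fst_mem_support_of_mem_edges h))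
    · exact h₃.ne h
    · exact h₁₃ rfl
  refine h₂.ne (hc.2 v v C₁ C₂ hC₁ hC₂ hne ⟨C₁.start_mem_support, C₂.start_mem_support⟩ ⟨?_, ?_⟩)
  · simp [C₁]
  · simp [C₂]

theorem IsCactus.ncard_support_inter_neighborSet_le_two [Finite V] (hc : IsCactus G) {a b : V}
    {p : G.Walk a b} (hp : p.IsPath) : ({z | z ∈ p.support} ∩ G.neighborSet a).ncard ≤ 2 := by
  classical
  cases p with
  | nil => simp
  | cons h p' =>
    rw [Walk.cons_isPath_iff] at hp
    have hsub : {z | z ∈ (Walk.cons h p').support} ∩ G.neighborSet a ⊆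
        {z | z ∈ p'.support} ∩ G.neighborSet a := by
      rintro z ⟨hz, haz⟩
      simp only [Walk.support_cons, List.mem_cons] at hz
      exact ⟨hz.resolve_left (G.ne_of_adj haz).symm, haz⟩
    refine (ncard_le_ncard hsub).trans (hc.ncard_inter_neighborSet_le_two fun x hx y hy =>
      ⟨(p'.dropUntil x hx).append (p'.dropUntil y hy).reverse, fun ha => hp.2 ?_⟩)
    rw [Walk.mem_support_append_iff, Walk.support_reverse, List.mem_reverse] at ha
    exact ha.elim (p'.support_dropUntil_subset_support hx ·)
      (p'.support_dropUntil_subset_support hy ·)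

theorem exists_isPath_neighborSet_subset_support [Fintype V] {t : Set V} {a b : V}
    (p : G.Walk a b) (hp : p.IsPath) (hpt : ∀ z ∈ p.support, z ∈ t) :
    ∃ (a' : V) (q : G.Walk a' b), q.IsPath ∧ (∀ z ∈ q.support, z ∈ t) ∧ p.length ≤ q.length ∧
      t ∩ G.neighborSet a' ⊆ {z | z ∈ q.support} := by
  by_cases h : t ∩ G.neighborSet a ⊆ {z | z ∈ p.support}
  · exact ⟨a, p, hp, hpt, le_rfl, h⟩
  obtain ⟨y, ⟨hyt, hay⟩, hyp⟩ := not_subset.1 h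
  have hp' : (Walk.cons (hay : G.Adj a y).symm p).IsPath := hp.cons hyp
  have := hp'.length_lt
  obtain ⟨a', q, hq, hqt, hlen, hq'⟩ := exists_isPath_neighborSet_subset_support (t := t) _ hp'
    (by simpa [hyt] using hpt)
  exact ⟨a', q, hq, hqt, (Nat.le_succ _).trans hlen, hq'⟩
termination_by Fintype.card V - p.length
decreasing_by simp only [Walk.length_cons] at this ⊢; omega

theorem IsCactus.exists_ne_ncard_inter_neighborSet_le_two [Fintype V] (hc : IsCactus G)
    {t : Set V} {v w : V} (hw : w ∈ t) (hwv : w ≠ v) :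
    ∃ x ∈ t, x ≠ v ∧ (t ∩ G.neighborSet x).ncard ≤ 2 := by
  have hdeg : ∀ {a b : V} (q : G.Walk a b), q.IsPath →
      t ∩ G.neighborSet a ⊆ {z | z ∈ q.support} → (t ∩ G.neighborSet a).ncard ≤ 2 :=
    fun q hq hsub => (ncard_le_ncard (subset_inter hsub inter_subset_right)).trans
      (hc.ncard_support_inter_neighborSet_le_two hq)
  obtain ⟨a, q, hq, hqt, -, hqn⟩ :=
    exists_isPath_neighborSet_subset_support (Walk.nil : G.Walk w w) (by simp) (by simpa)
  by_cases hav : a = v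
  · subst hav
    -- `q` starts at `v`, so extend `q.reverse`, which ends at `v` and has positive length
    obtain ⟨a', q', hq', hq't, hlen, hq'n⟩ := exists_isPath_neighborSet_subset_support q.reverse
      hq.reverse (by simpa using hqt)
    refine ⟨a', hq't _ q'.start_mem_support, ?_, hdeg q' hq' hq'n⟩
    rintro rfl
    have hq0 : q'.length = 0 := Walk.isPath_iff_nil.1 hq' |>.length_eq_zero
    exact hwv (Walk.eq_of_length_eq_zero (by simpa [hq0] using hlen)).symm
  · exact ⟨a, hqt _ q.start_mem_support, hav, hdeg q hq hqn⟩

/- Colourings of `G[t]` are handled as functions on all of `V`, of which only the values on `t`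
matter; `exists_restrict_eq` and the `*_induce_iff` lemmas translate back. -/

def ProperOn (G : SimpleGraph V) (t : Set V) (F : V → ℕ) : Prop :=
  ∀ x ∈ t, ∀ y ∈ t, G.Adj x y → F x ≠ F y

def GrundyAt (G : SimpleGraph V) (t : Set V) (F : V → ℕ) (x : V) : Prop :=
  ∀ i, 1 ≤ i → i < F x → ∃ y ∈ t, G.Adj x y ∧ F y = i

def IsBVertexOn (G : SimpleGraph V) (t : Set V) (k : ℕ) (F : V → ℕ) (x : V) : Prop :=
  ∀ j ∈ Icc 1 k, j ≠ F x → ∃ y ∈ t, G.Adj x y ∧ F y = j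

def IsNiceVertexOn (G : SimpleGraph V) (t : Set V) (k : ℕ) (F : V → ℕ) (x : V) : Prop :=
  ∀ j ∈ Icc 1 k, j ≠ F x → ∃ y ∈ t, G.Adj x y ∧ F y = j ∧ IsBVertexOn G t k F y

lemma IsNiceVertexOn.isBVertexOn {t : Set V} {k : ℕ} {F : V → ℕ} {x : V}
    (h : IsNiceVertexOn G t k F x) : IsBVertexOn G t k F x := fun j hj hjx =>
  let ⟨y, hy, hxy, hyj, _⟩ := h j hj hjx
  ⟨y, hy, hxy, hyj⟩

lemma ProperOn.mono {s t : Set V} {F : V → ℕ} (h : ProperOn G t F) (hst : s ⊆ t) :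
    ProperOn G s F := fun x hx y hy => h x (hst hx) y (hst hy)

lemma ProperOn.update_insert [DecidableEq V] {s : Set V} {F : V → ℕ} {v : V} {c : ℕ}
    (hF : ProperOn G s F) (hv : v ∉ s) (hc : ∀ x ∈ s, G.Adj v x → F x ≠ c) :
    ProperOn G (insert v s) (Function.update F v c) := by
  have hne : ∀ x ∈ s, x ≠ v := fun x hx => ne_of_mem_of_not_mem hx hv
  rintro x (rfl | hx) y (rfl | hy) hxy
  · exact (G.loopless.irrefl _ hxy).elim
  · simpa [Function.update_of_ne (hne y hy)] using (hc y hy hxy).symm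
  · simpa [Function.update_of_ne (hne x hx)] using hc x hx hxy.symm
  · simpa [Function.update_of_ne (hne x hx), Function.update_of_ne (hne y hy)] using
      hF x hx y hy hxy

lemma ProperOn.eq_three_sub {t : Set V} {F : V → ℕ} {x y : V} (hF : ProperOn G t F)
    (hcol : ∀ x ∈ t, F x ∈ Icc 1 2) (hx : x ∈ t) (hy : y ∈ t) (hxy : G.Adj x y) :
    F y = 3 - F x := by
  have h1 := hcol x hx
  have h2 := hcol y hy
  have := hF x hx y hy hxy
  simp only [mem_Icc] at h1 h2
  omega

section EqOn

variable {s t C : Set V} {k : ℕ} {F F' : V → ℕ} {x : V}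

lemma GrundyAt.of_eqOn (h : GrundyAt G s F x)
    (hC : ∀ y ∈ C, ∀ z ∈ s, G.Adj y z → z ∈ C) (hst : s ⊆ t) (hF : EqOn F' F C) (hx : x ∈ C) :
    GrundyAt G t F' x := by
  intro i hi hix
  obtain ⟨y, hy, hxy, rfl⟩ := h i hi (hF hx ▸ hix)
  exact ⟨y, hst hy, hxy, hF (hC x hx y hy hxy)⟩

lemma IsBVertexOn.of_eqOn (h : IsBVertexOn G s k F x) (hC : ∀ y ∈ C, ∀ z ∈ s, G.Adj y z → z ∈ C)
    (hst : s ⊆ t) (hF : EqOn F' F C) (hx : x ∈ C) : IsBVertexOn G t k F' x := by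
  intro j hj hjx
  obtain ⟨y, hy, hxy, rfl⟩ := h j hj (hF hx ▸ hjx)
  exact ⟨y, hst hy, hxy, hF (hC x hx y hy hxy)⟩

lemma IsNiceVertexOn.of_eqOn (h : IsNiceVertexOn G s k F x)
    (hC : ∀ y ∈ C, ∀ z ∈ s, G.Adj y z → z ∈ C) (hst : s ⊆ t) (hF : EqOn F' F C) (hx : x ∈ C) :
    IsNiceVertexOn G t k F' x := by
  intro j hj hjx
  obtain ⟨y, hy, hxy, rfl, hby⟩ := h j hj (hF hx ▸ hjx)
  have hyC := hC x hx y hy hxy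
  exact ⟨y, hst hy, hxy, hF hyC, hby.of_eqOn hC hst hF hyC⟩

end EqOn

section Restrict

variable {t : Set V} {k : ℕ} {F : V → ℕ}

lemma exists_restrict_eq (c : t → ℕ) : ∃ F : V → ℕ, (fun x : t => F x) = c :=
  ⟨Function.extend Subtype.val c 0, funext fun x => Subtype.val_injective.extend_apply c 0 x⟩

lemma isProperKColoring_induce_iff : IsProperKColoring (G.induce t) k (fun x => F x) ↔
    (∀ x ∈ t, F x ∈ Icc 1 k) ∧ ProperOn G t F ∧ ∀ j ∈ Icc 1 k, ∃ x ∈ t, F x = j := by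
  simp [IsProperKColoring, ProperOn]

lemma isBVertex_induce_iff {x : t} :
    IsBVertex (G.induce t) k (fun x => F x) x ↔ IsBVertexOn G t k F x :=
  forall₂_congr fun _ _ => imp_congr_right fun _ =>
    ⟨fun ⟨y, hxy, hyj⟩ => ⟨y, y.2, hxy, hyj⟩, fun ⟨y, hy, hxy, hyj⟩ => ⟨⟨y, hy⟩, hxy, hyj⟩⟩

lemma isNiceVertex_induce_iff {x : t} :
    IsNiceVertex (G.induce t) k (fun x => F x) x ↔ IsNiceVertexOn G t k F x := by
  refine ⟨fun h j hj hjx => ?_, fun h => ⟨isBVertex_induce_iff.2 h.isBVertexOn, fun j hj hjx => ?_⟩⟩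
  · obtain ⟨y, hxy, hyj, hby⟩ := h.2 j hj hjx
    exact ⟨y, y.2, hxy, hyj, isBVertex_induce_iff.1 hby⟩
  · obtain ⟨y, hy, hxy, hyj, hby⟩ := h j hj hjx
    exact ⟨⟨y, hy⟩, hxy, hyj, isBVertex_induce_iff.2 hby⟩

lemma isBStarColoring_induce_iff : IsBStarColoring (G.induce t) k (fun x => F x) ↔
    (∀ x ∈ t, F x ∈ Icc 1 k) ∧ ProperOn G t F ∧ ∃ u ∈ t, F u = k ∧ IsNiceVertexOn G t k F u := by
  simp only [IsBStarColoring, isProperKColoring_induce_iff, isNiceVertex_induce_iff]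
  refine ⟨fun ⟨⟨hcol, hF, _⟩, u, huk, hnice⟩ => ⟨hcol, hF, u, u.2, huk, hnice⟩,
    fun ⟨hcol, hF, u, hu, huk, hnice⟩ => ⟨⟨hcol, hF, fun j hj => ?_⟩, ⟨u, hu⟩, huk, hnice⟩⟩
  by_cases hjk : j = k
  · exact ⟨u, hu, huk ▸ hjk.symm⟩
  · obtain ⟨y, hy, -, hyj, -⟩ := hnice j hj (huk ▸ hjk)
    exact ⟨y, hy, hyj⟩

lemma isZColoring_induce_iff : IsZColoring (G.induce t) k (fun x => F x) ↔
    IsBStarColoring (G.induce t) k (fun x => F x) ∧ ∀ x ∈ t, GrundyAt G t F x := by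
  simp only [IsZColoring, IsGrundyColoring, IsBStarColoring, GrundyAt]
  refine ⟨fun ⟨⟨hp, hg⟩, hn⟩ => ⟨⟨hp, hn⟩, fun x hx i hi hix => ?_⟩,
    fun ⟨⟨hp, hn⟩, hg⟩ => ⟨⟨hp, fun i j hi hij _ x hxj => ?_⟩, hn⟩⟩
  · obtain ⟨⟨y, hy⟩, hxy, hyi⟩ := hg i (F x) hi hix (hp.1 ⟨x, hx⟩).2 ⟨x, hx⟩ rfl
    exact ⟨y, hy, hxy, hyi⟩
  · obtain ⟨y, hy, hxy, hyi⟩ := hg x x.2 i hi (hxj ▸ hij)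
    exact ⟨⟨y, hy⟩, hxy, hyi⟩

end Restrict

noncomputable def mexPos (S : Set ℕ) : ℕ := sInf {n | 1 ≤ n ∧ n ∉ S}

lemma mexPos_spec {S : Set ℕ} (hS : S.Finite) : 1 ≤ mexPos S ∧ mexPos S ∉ S := by
  obtain ⟨n, hn, hnS⟩ := (Ici_infinite 1).exists_notMem_finite hS
  exact Nat.sInf_mem (s := {n | 1 ≤ n ∧ n ∉ S}) ⟨n, hn, hnS⟩

lemma mem_of_lt_mexPos {S : Set ℕ} {i : ℕ} (h1 : 1 ≤ i) (hi : i < mexPos S) : i ∈ S := by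
  by_contra h
  exact (Nat.sInf_le (show i ∈ {n | 1 ≤ n ∧ n ∉ S} from ⟨h1, h⟩)).not_gt hi

lemma mexPos_le_ncard_add_one {S : Set ℕ} (hS : S.Finite) : mexPos S ≤ S.ncard + 1 := by
  have hsub : Icc 1 (mexPos S - 1) ⊆ S := fun i hi => mem_of_lt_mexPos hi.1 (by grind)
  have := ncard_le_ncard hsub hS
  rw [ncard_Icc_nat] at this
  omega

theorem ProperOn.exists_extend_insert [Finite V] {t : Set V} {F : V → ℕ} {x : V} {d : ℕ}
    (hF : ProperOn G t F) (hx : x ∉ t) (hd : (t ∩ G.neighborSet x).ncard ≤ d) :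
    ∃ F' : V → ℕ, EqOn F' F t ∧ ProperOn G (insert x t) F' ∧ F' x ∈ Icc 1 (d + 1) ∧
      GrundyAt G (insert x t) F' x := by
  classical
  set S := F '' (t ∩ G.neighborSet x)
  have hS : S.Finite := toFinite S
  have hSd : S.ncard ≤ d := (ncard_image_le (toFinite _)).trans hd
  have hne : ∀ y ∈ t, y ≠ x := fun y hy => ne_of_mem_of_not_mem hy hx
  refine ⟨Function.update F x (mexPos S), fun y hy => Function.update_of_ne (hne y hy) _ _,
    ?_, ?_, ?_⟩
  · exact hF.update_insert hx fun y hy hxy h =>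
      (mexPos_spec hS).2 (h ▸ mem_image_of_mem F ⟨hy, hxy⟩)
  · simp only [Function.update_self, mem_Icc]
    exact ⟨(mexPos_spec hS).1, (mexPos_le_ncard_add_one hS).trans (by omega)⟩
  · intro i hi hix
    rw [Function.update_self] at hix
    obtain ⟨y, ⟨hy, hxy⟩, rfl⟩ := mem_of_lt_mexPos hi hix
    exact ⟨y, mem_insert_of_mem x hy, hxy, Function.update_of_ne (hne y hy) _ _⟩

theorem ProperOn.exists_extend_of_degenerate [Finite V] {T : Set V} {F : V → ℕ} {d : ℕ}
    (hF : ProperOn G T F) (R : Finset V) (hRT : Disjoint (R : Set V) T)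
    (hdeg : ∀ R' ⊆ R, R'.Nonempty → ∃ x ∈ R', ((T ∪ ↑R') ∩ G.neighborSet x).ncard ≤ d) :
    ∃ F' : V → ℕ, EqOn F' F T ∧ ProperOn G (T ∪ ↑R) F' ∧
      ∀ x ∈ R, F' x ∈ Icc 1 (d + 1) ∧ GrundyAt G (T ∪ ↑R) F' x := by
  classical
  induction R using Finset.strongInduction with | H R ih => ?_
  rcases R.eq_empty_or_nonempty with rfl | hR
  · exact ⟨F, eqOn_refl F T, by simpa using hF, by simp⟩
  obtain ⟨x, hxR, hx⟩ := hdeg R subset_rfl hR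
  obtain ⟨F₁, hF₁T, hF₁, hF₁R⟩ := ih (R.erase x) (Finset.erase_ssubset hxR)
    (hRT.mono_left (by simp)) fun R' h => hdeg R' (h.trans (Finset.erase_subset x R))
  have hTR : T ∪ ↑R = insert x (T ∪ ↑(R.erase x)) := by
    rw [Finset.coe_erase, ← union_insert, insert_sdiff_singleton, insert_eq_of_mem (by simpa)]
  have hxT : x ∉ T ∪ ↑(R.erase x) := by
    simpa using fun h => hRT.notMem_of_mem_left (by simpa using hxR) h
  have hdx : ((T ∪ ↑(R.erase x)) ∩ G.neighborSet x).ncard ≤ d :=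
    (ncard_le_ncard (inter_subset_inter_left _ (hTR ▸ subset_insert _ _))).trans hx
  obtain ⟨F', hF'₁, hF', hF'x, hgx⟩ := hF₁.exists_extend_insert hxT hdx
  refine ⟨F', fun y hy => (hF'₁ (mem_union_left _ hy)).trans (hF₁T hy), hTR ▸ hF', fun y hy => ?_⟩
  rw [hTR]
  by_cases hyx : y = x
  · subst hyx
    exact ⟨hF'x, hgx⟩
  have hy' : y ∈ R.erase x := Finset.mem_erase.2 ⟨hyx, hy⟩
  obtain ⟨hcol, hgr⟩ := hF₁R y hy'
  exact ⟨hF'₁ (mem_union_right _ hy') ▸ hcol,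
    hgr.of_eqOn (fun _ _ _ hz _ => hz) (subset_insert _ _) hF'₁ (mem_union_right _ hy')⟩

lemma exists_walk_of_reachable_induce {s : Set V} {x y : s} (h : (G.induce s).Reachable x y) :
    ∃ p : G.Walk x y, ∀ z ∈ p.support, z ∈ s := by
  obtain ⟨p⟩ := h
  refine ⟨p.map (Embedding.induce s).toHom, fun z hz => ?_⟩
  obtain ⟨z', -, rfl⟩ := List.mem_map.1 (Walk.support_map _ p ▸ hz)
  exact z'.2

lemma exists_adj_of_reachable_induce {s : Set V} {x y : s} (h : (G.induce s).Reachable x y)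
    (hxy : x ≠ y) : ∃ z ∈ s, G.Adj x z := by
  obtain ⟨p⟩ := h
  cases p with
  | nil => exact (hxy rfl).elim
  | cons h _ => exact ⟨_, Subtype.prop _, h⟩

theorem IsCactus.exists_mem_ncard_union_inter_neighborSet_le_two [Fintype V] (hc : IsCactus G)
    {s C : Set V} {v : V} (hC : ∀ x ∈ C, ∀ y ∈ s, G.Adj x y → y ∈ C)
    (hlink : ∀ x ∈ C, ∀ y ∈ C, ∃ p : G.Walk x y, v ∉ p.support)
    {R : Finset V} (hR : ↑R ⊆ insert v s \ C) (hne : R.Nonempty) :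
    ∃ x ∈ R, ((C ∪ ↑R) ∩ G.neighborSet x).ncard ≤ 2 := by
  by_cases h : ∃ w ∈ R, w ≠ v
  · obtain ⟨w, hw, hwv⟩ := h
    obtain ⟨x, hx, hxv, hdeg⟩ := hc.exists_ne_ncard_inter_neighborSet_le_two
      (t := insert v ↑R) (mem_insert_of_mem v hw) hwv
    have hxR : x ∈ R := hx.resolve_left hxv
    obtain ⟨hxs, hxC⟩ := hR hxR
    have hxs : x ∈ s := hxs.resolve_left hxv
    refine ⟨x, hxR, (ncard_le_ncard ?_).trans hdeg⟩
    rintro y ⟨hy | hy, hxy⟩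
    · exact (hxC (hC y hy x hxs (G.adj_symm hxy))).elim
    · exact ⟨mem_insert_of_mem v hy, hxy⟩
  · push Not at h
    obtain ⟨w, hw⟩ := hne
    obtain rfl := h w hw
    refine ⟨w, hw, (ncard_le_ncard ?_).trans (hc.ncard_inter_neighborSet_le_two hlink)⟩
    rintro y ⟨hy | hy, hwy⟩
    · exact ⟨hy, hwy⟩
    · exact (G.loopless.irrefl _ (h y hy ▸ hwy)).elim

theorem IsCactus.exists_recoloring_insert [Fintype V] (hc : IsCactus G) {s : Set V} {v u : V}
    {k : ℕ} {F : V → ℕ} (hv : v ∉ s) (hk : 3 ≤ k) (hcol : ∀ x ∈ s, F x ∈ Icc 1 k)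
    (hF : ProperOn G s F) (hu : u ∈ s) (hnice : IsNiceVertexOn G s k F u) :
    ∃ F' : V → ℕ, (∀ x ∈ insert v s, F' x ∈ Icc 1 k) ∧ ProperOn G (insert v s) F' ∧
      F' u = F u ∧ IsNiceVertexOn G (insert v s) k F' u ∧
      ∀ x ∈ insert v s, (x ∈ s → GrundyAt G s F x) → GrundyAt G (insert v s) F' x := by
  classical
  set C : Set V := {x | ∃ hx : x ∈ s, (G.induce s).Reachable ⟨x, hx⟩ ⟨u, hu⟩}
  have hCs : C ⊆ s := fun x ⟨hx, _⟩ => hx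
  have huC : u ∈ C := ⟨hu, Reachable.refl _⟩
  have hC : ∀ x ∈ C, ∀ y ∈ s, G.Adj x y → y ∈ C := fun x ⟨hx, hxu⟩ y hy hxy =>
    ⟨hy, (Adj.reachable (show (G.induce s).Adj ⟨y, hy⟩ ⟨x, hx⟩ from hxy.symm)).trans hxu⟩
  have hlink : ∀ x ∈ C, ∀ y ∈ C, ∃ p : G.Walk x y, v ∉ p.support := fun x ⟨_, hxu⟩ y ⟨_, hyu⟩ =>
    let ⟨p, hp⟩ := exists_walk_of_reachable_induce (hxu.trans hyu.symm)
    ⟨p, fun h => hv (hp v h)⟩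
  set R := (toFinite (insert v s \ C)).toFinset
  have hR : ↑R = insert v s \ C := Finite.coe_toFinset _
  have hCR : C ∪ ↑R = insert v s := by
    rw [hR, union_sdiff_self, union_eq_right.2 (hCs.trans (subset_insert v s))]
  obtain ⟨F', hF'C, hF', hF'R⟩ := (hF.mono hCs).exists_extend_of_degenerate (d := 2) R
    (hR ▸ disjoint_sdiff_left) fun R' hR' hne =>
      hc.exists_mem_ncard_union_inter_neighborSet_le_two hC hlink (hR ▸ Finset.coe_subset.2 hR') hne
  rw [hCR] at hF' hF'R
  have hxR : ∀ x ∈ insert v s, x ∉ C → x ∈ R := fun x hx hxC => by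
    rw [← Finset.mem_coe, hR]; exact ⟨hx, hxC⟩
  refine ⟨F', fun x hx => ?_, hF', hF'C huC, hnice.of_eqOn hC (subset_insert v s) hF'C huC,
    fun x hx hgx => ?_⟩
  · by_cases hxC : x ∈ C
    · exact hF'C hxC ▸ hcol x (hCs hxC)
    · obtain ⟨h1, h3⟩ := (hF'R x (hxR x hx hxC)).1
      exact ⟨h1, h3.trans hk⟩
  · by_cases hxC : x ∈ C
    · exact (hgx (hCs hxC)).of_eqOn hC (subset_insert v s) hF'C hxC
    · exact (hF'R x (hxR x hx hxC)).2

lemma exists_twoColoring_insert {s : Set V} {v : V} {F : V → ℕ} (hv : v ∉ s)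
    (hcol : ∀ x ∈ s, F x ∈ Icc 1 2) (hF : ProperOn G s F)
    (h : ∀ w₁ w₂ : s, G.Adj v w₁ → G.Adj v w₂ → F w₁ = 1 → F w₂ = 2 →
      ¬(G.induce s).Reachable w₁ w₂) :
    ∃ F₂ : V → ℕ, (∀ x ∈ insert v s, F₂ x ∈ Icc 1 2) ∧ ProperOn G (insert v s) F₂ := by
  classical
  -- swap the two colours on each component of `G[s]` containing a neighbour of `v` of colour 2
  let P : V → Prop := fun x =>
    ∃ hx : x ∈ s, ∃ y : s, G.Adj v y ∧ F y = 2 ∧ (G.induce s).Reachable ⟨x, hx⟩ y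
  let F₁ : V → ℕ := fun x => if P x then 3 - F x else F x
  have hPadj : ∀ x ∈ s, ∀ y ∈ s, G.Adj x y → (P x ↔ P y) := fun x hx y hy hxy =>
    ⟨fun ⟨_, z, hz⟩ => ⟨hy, z, hz.1, hz.2.1,
      (Adj.reachable (show (G.induce s).Adj ⟨y, hy⟩ ⟨x, hx⟩ from hxy.symm)).trans hz.2.2⟩,
    fun ⟨_, z, hz⟩ => ⟨hx, z, hz.1, hz.2.1,
      (Adj.reachable (show (G.induce s).Adj ⟨x, hx⟩ ⟨y, hy⟩ from hxy)).trans hz.2.2⟩⟩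
  have hcol₁ : ∀ x ∈ s, F₁ x ∈ Icc 1 2 := fun x hx => by
    have := hcol x hx
    simp only [F₁, mem_Icc] at this ⊢
    split_ifs <;> omega
  have hF₁ : ProperOn G s F₁ := fun x hx y hy hxy => by
    have h1 := hcol x hx
    have h2 := hcol y hy
    have hne := hF x hx y hy hxy
    simp only [mem_Icc] at h1 h2
    simp only [F₁, hPadj x hx y hy hxy]
    split_ifs <;> omega
  have hv₁ : ∀ x ∈ s, G.Adj v x → F₁ x ≠ 2 := fun x hx hvx hx2 => by
    have := hcol x hx
    simp only [F₁, mem_Icc] at hx2 this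
    split_ifs at hx2 with hP
    · obtain ⟨_, y, hvy, hy2, hxy⟩ := hP
      exact h ⟨x, hx⟩ y hvx hvy (show F x = 1 by omega) hy2 hxy
    · exact hP ⟨hx, ⟨x, hx⟩, hvx, hx2, Reachable.refl _⟩
  refine ⟨Function.update F₁ v 2, fun x hx => ?_, hF₁.update_insert hv hv₁⟩
  rcases hx with rfl | hx
  · simp
  · rw [Function.update_of_ne (ne_of_mem_of_not_mem hx hv)]
    exact hcol₁ x hx

lemma exists_grundy_twoColoring {t : Set V} {F : V → ℕ} (hcol : ∀ x ∈ t, F x ∈ Icc 1 2)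
    (hF : ProperOn G t F) :
    ∃ F' : V → ℕ, (∀ x ∈ t, F' x ∈ Icc 1 2) ∧ ProperOn G t F' ∧ (∀ x ∈ t, GrundyAt G t F' x) ∧
      ∀ x ∈ t, (∃ y ∈ t, G.Adj x y) → F' x = F x := by
  classical
  let F' : V → ℕ := fun x => if ∃ y ∈ t, G.Adj x y then F x else 1
  have hF' : ∀ x ∈ t, (∃ y ∈ t, G.Adj x y) → F' x = F x := fun x _ h => if_pos h
  have hcol' : ∀ x ∈ t, F' x ∈ Icc 1 2 := fun x hx => by
    by_cases h : ∃ y ∈ t, G.Adj x y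
    · exact hF' x hx h ▸ hcol x hx
    · simp [F', h]
  refine ⟨F', hcol', fun x hx y hy hxy => ?_, fun x hx i hi hix => ?_, hF'⟩
  · rw [hF' x hx ⟨y, hy, hxy⟩, hF' y hy ⟨x, hx, hxy.symm⟩]
    exact hF x hx y hy hxy
  · by_cases h : ∃ y ∈ t, G.Adj x y
    · obtain ⟨y, hy, hxy⟩ := h
      rw [hF' x hx ⟨y, hy, hxy⟩] at hix
      refine ⟨y, hy, hxy, ?_⟩
      have := hcol x hx
      rw [hF' y hy ⟨x, hx, hxy.symm⟩, hF.eq_three_sub hcol hx hy hxy]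
      simp only [mem_Icc] at this
      omega
    · simp only [F', if_neg h] at hix
      omega

lemma exists_zColoring_two {t : Set V} {F : V → ℕ} (hcol : ∀ x ∈ t, F x ∈ Icc 1 2)
    (hF : ProperOn G t F) {a b : V} (ha : a ∈ t) (hb : b ∈ t) (hab : G.Adj a b) :
    ∃ F' : V → ℕ, IsZColoring (G.induce t) 2 (fun x => F' x) := by
  obtain ⟨F', hcol', hF', hgr, -⟩ := exists_grundy_twoColoring hcol hF
  refine ⟨F', ?_⟩
  wlog ha2 : F' a = 2 generalizing a b
  · refine this hb ha hab.symm ?_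
    have := hcol' a ha
    rw [hF'.eq_three_sub hcol' ha hb hab]
    simp only [mem_Icc] at this
    omega
  have hb1 : F' b = 1 := by rw [hF'.eq_three_sub hcol' ha hb hab, ha2]
  refine isZColoring_induce_iff.2 ⟨isBStarColoring_induce_iff.2
    ⟨hcol', hF', a, ha, ha2, fun j hj hja => ?_⟩, hgr⟩
  obtain rfl : j = 1 := by simp only [mem_Icc] at hj; omega
  exact ⟨b, hb, hab, hb1, fun i hi hib => ⟨a, ha, hab.symm, by simp only [mem_Icc] at hi; omega⟩⟩

lemma exists_zColoring_three_insert {s : Set V} {v w₁ w₂ : V} {F : V → ℕ} (hv : v ∉ s)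
    (hcol : ∀ x ∈ s, F x ∈ Icc 1 2) (hF : ProperOn G s F) (hw₁ : w₁ ∈ s) (hw₂ : w₂ ∈ s)
    (hvw₁ : G.Adj v w₁) (hvw₂ : G.Adj v w₂) (hF₁ : F w₁ = 1) (hF₂ : F w₂ = 2)
    (hw₁s : ∃ y ∈ s, G.Adj w₁ y) (hw₂s : ∃ y ∈ s, G.Adj w₂ y) :
    ∃ F' : V → ℕ, IsZColoring (G.induce (insert v s)) 3 (fun x => F' x) := by
  classical
  obtain ⟨F₀, hcol₀, hF₀, hgr₀, hkeep⟩ := exists_grundy_twoColoring hcol hF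
  set F' := Function.update F₀ v 3
  have hF's : EqOn F' F₀ s := fun x hx => Function.update_of_ne (ne_of_mem_of_not_mem hx hv) _ _
  have hF'v : F' v = 3 := Function.update_self _ _ _
  have hcol' : ∀ x ∈ s, F' x ∈ Icc 1 2 := fun x hx => hF's hx ▸ hcol₀ x hx
  have hF'w₁ : F' w₁ = 1 := (hF's hw₁).trans (hkeep w₁ hw₁ hw₁s ▸ hF₁)
  have hF'w₂ : F' w₂ = 2 := (hF's hw₂).trans (hkeep w₂ hw₂ hw₂s ▸ hF₂)
  have hb : ∀ z ∈ s, G.Adj v z → (∃ y ∈ s, G.Adj z y) → IsBVertexOn G (insert v s) 3 F' z := by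
    rintro z hz hvz ⟨y, hy, hzy⟩ j hj hjz
    by_cases hj3 : j = 3
    · exact ⟨v, mem_insert v s, hvz.symm, hj3 ▸ hF'v⟩
    refine ⟨y, mem_insert_of_mem v hy, hzy, ?_⟩
    have := hcol₀ z hz
    rw [hF's hy, hF₀.eq_three_sub hcol₀ hz hy hzy]
    rw [hF's hz] at hjz
    simp only [mem_Icc] at this hj
    omega
  refine ⟨F', isZColoring_induce_iff.2 ⟨isBStarColoring_induce_iff.2
    ⟨fun x hx => ?_, ?_, v, mem_insert v s, hF'v, fun j hj hjv => ?_⟩, fun x hx => ?_⟩⟩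
  · rcases hx with rfl | hx
    · simp [hF'v]
    · exact Icc_subset_Icc_right (by norm_num) (hcol' x hx)
  · exact hF₀.update_insert hv fun x hx _ h => by simpa [h] using hcol₀ x hx
  · simp only [mem_Icc] at hj
    rcases (by omega : j = 1 ∨ j = 2) with rfl | rfl
    · exact ⟨w₁, mem_insert_of_mem v hw₁, hvw₁, hF'w₁, hb w₁ hw₁ hvw₁ hw₁s⟩
    · exact ⟨w₂, mem_insert_of_mem v hw₂, hvw₂, hF'w₂, hb w₂ hw₂ hvw₂ hw₂s⟩
  · rcases hx with rfl | hx
    · intro i hi hix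
      rcases (by omega : i = 1 ∨ i = 2) with rfl | rfl
      · exact ⟨w₁, mem_insert_of_mem _ hw₁, hvw₁, hF'w₁⟩
      · exact ⟨w₂, mem_insert_of_mem _ hw₂, hvw₂, hF'w₂⟩
    · exact (hgr₀ x hx).of_eqOn (fun _ _ _ hz _ => hz) (subset_insert v s) hF's hx

lemma isZColoring_induce_one {t : Set V} {u : V} (hu : u ∈ t) (h : ∀ x ∈ t, ∀ y ∈ t, ¬G.Adj x y) :
    IsZColoring (G.induce t) 1 (fun _ => 1) :=
  isZColoring_induce_iff (F := fun _ => 1).2 ⟨isBStarColoring_induce_iff (F := fun _ => 1).2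
    ⟨fun _ _ => by simp, fun x hx y hy hxy => (h x hx y hy hxy).elim, u, hu, rfl,
      fun j hj hj1 => (hj1 (by simp at hj; omega)).elim⟩, fun _ _ i hi hi1 => by simp at hi1; omega⟩

theorem exists_zColoring_insert_of_le_two {s : Set V} {v u : V} {k : ℕ} {F : V → ℕ} (hv : v ∉ s)
    (hk : k ≤ 2) (hcol : ∀ x ∈ s, F x ∈ Icc 1 k) (hF : ProperOn G s F) (hu : u ∈ s)
    (huk : F u = k) (hnice : IsNiceVertexOn G s k F u) :
    ∃ k' ≥ k, ∃ F' : V → ℕ, IsZColoring (G.induce (insert v s)) k' (fun x => F' x) := by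
  have hcol₂ : ∀ x ∈ s, F x ∈ Icc 1 2 := fun x hx => Icc_subset_Icc_right hk (hcol x hx)
  by_cases hedge : ∃ a ∈ insert v s, ∃ b ∈ insert v s, G.Adj a b
  · obtain ⟨a, ha, b, hb, hab⟩ := hedge
    by_cases hpair : ∃ w₁ w₂ : s, G.Adj v w₁ ∧ G.Adj v w₂ ∧ F w₁ = 1 ∧ F w₂ = 2 ∧
        (G.induce s).Reachable w₁ w₂
    · obtain ⟨w₁, w₂, hvw₁, hvw₂, hF₁, hF₂, hreach⟩ := hpair
      have hw : w₁ ≠ w₂ := fun h => by simp [h, hF₂] at hF₁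
      exact ⟨3, by omega, exists_zColoring_three_insert hv hcol₂ hF w₁.2 w₂.2 hvw₁ hvw₂ hF₁ hF₂
        (exists_adj_of_reachable_induce hreach hw)
        (exists_adj_of_reachable_induce hreach.symm hw.symm)⟩
    · push Not at hpair
      obtain ⟨F₂, hcol', hF'⟩ := exists_twoColoring_insert hv hcol₂ hF hpair
      exact ⟨2, hk, exists_zColoring_two hcol' hF' ha hb hab⟩
  · push Not at hedge
    refine ⟨1, ?_, fun _ => 1, isZColoring_induce_one (mem_insert v s) hedge⟩
    by_contra! hk1
    obtain ⟨y, hy, huy, -⟩ := hnice 1 ⟨le_rfl, by omega⟩ (by omega)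
    exact hedge u (mem_insert_of_mem v hu) y (mem_insert_of_mem v hy) huy

lemma IsProperKColoring.le_card [Finite W] {H : SimpleGraph W} {k : ℕ} {c : W → ℕ}
    (h : IsProperKColoring H k c) : k ≤ Nat.card W :=
  calc k = (Icc 1 k).ncard := by simp
    _ ≤ (c '' univ).ncard := ncard_le_ncard fun j hj =>
        let ⟨x, hx⟩ := h.2.2 j hj
        ⟨x, mem_univ x, hx⟩
    _ ≤ (univ : Set W).ncard := ncard_image_le
    _ = Nat.card W := ncard_univ W

lemma sSup_le_sSup_of_forall_exists_le {A B : Set ℕ} (hB : BddAbove B)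
    (h : ∀ a ∈ A, ∃ b ∈ B, a ≤ b) : sSup A ≤ sSup B := by
  rcases A.eq_empty_or_nonempty with rfl | hA
  · simp
  · exact csSup_le hA fun a ha => let ⟨b, hb, hab⟩ := h a ha; hab.trans (le_csSup hB hb)

lemma le_of_subset_of_forall_le_insert {α β : Type*} [Finite α] [Preorder β] {f : Set α → β}
    (hf : ∀ s a, f s ≤ f (insert a s)) {s t : Set α} (hst : s ⊆ t) : f s ≤ f t := by
  rw [← union_sdiff_cancel hst]
  generalize t \ s = d
  induction d, toFinite d using Set.Finite.induction_on with
  | empty => simp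
  | insert _ _ ih => exact ih.trans (union_insert .. ▸ hf _ _)

section InsertVertex

variable [Fintype V] {s : Set V} {v : V} {k : ℕ} {c : s → ℕ}

theorem IsCactus.exists_bStarColoring_insert (hc : IsCactus G) (hv : v ∉ s)
    (h : IsBStarColoring (G.induce s) k c) :
    ∃ k' ≥ k, ∃ c' : ↥(insert v s) → ℕ, IsBStarColoring (G.induce (insert v s)) k' c' := by
  obtain ⟨F, rfl⟩ := exists_restrict_eq c
  obtain ⟨hcol, hF, u, hu, huk, hnice⟩ := isBStarColoring_induce_iff.1 h
  by_cases hk : 3 ≤ k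
  · obtain ⟨F', hcol', hF', hF'u, hnice', -⟩ := hc.exists_recoloring_insert hv hk hcol hF hu hnice
    exact ⟨k, le_rfl, _, isBStarColoring_induce_iff.2
      ⟨hcol', hF', u, mem_insert_of_mem v hu, hF'u.trans huk, hnice'⟩⟩
  · obtain ⟨k', hk', F', h'⟩ :=
      exists_zColoring_insert_of_le_two hv (by omega) hcol hF hu huk hnice
    exact ⟨k', hk', _, (isZColoring_induce_iff.1 h').1⟩

theorem IsCactus.exists_zColoring_insert (hc : IsCactus G) (hv : v ∉ s)
    (h : IsZColoring (G.induce s) k c) :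
    ∃ k' ≥ k, ∃ c' : ↥(insert v s) → ℕ, IsZColoring (G.induce (insert v s)) k' c' := by
  obtain ⟨F, rfl⟩ := exists_restrict_eq c
  obtain ⟨hb, hgr⟩ := isZColoring_induce_iff.1 h
  obtain ⟨hcol, hF, u, hu, huk, hnice⟩ := isBStarColoring_induce_iff.1 hb
  by_cases hk : 3 ≤ k
  · obtain ⟨F', hcol', hF', hF'u, hnice', hgr'⟩ :=
      hc.exists_recoloring_insert hv hk hcol hF hu hnice
    exact ⟨k, le_rfl, _, isZColoring_induce_iff.2 ⟨isBStarColoring_induce_iff.2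
      ⟨hcol', hF', u, mem_insert_of_mem v hu, hF'u.trans huk, hnice'⟩,
      fun x hx => hgr' x hx (hgr x)⟩⟩
  · obtain ⟨k', hk', F', h'⟩ :=
      exists_zColoring_insert_of_le_two hv (by omega) hcol hF hu huk hnice
    exact ⟨k', hk', _, h'⟩

end InsertVertex

theorem IsCactus.zNum_induce_le_insert [Fintype V] (hc : IsCactus G) (s : Set V) (v : V) :
    zNum (G.induce s) ≤ zNum (G.induce (insert v s)) := by
  by_cases hv : v ∈ s
  · rw [insert_eq_of_mem hv]
  refine sSup_le_sSup_of_forall_exists_le ⟨_, fun k ⟨c, h⟩ => h.1.1.le_card⟩ fun k ⟨c, h⟩ => ?_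
  obtain ⟨k', hk', c', h'⟩ := hc.exists_zColoring_insert hv h
  exact ⟨k', ⟨c', h'⟩, hk'⟩

theorem IsCactus.bStar_induce_le_insert [Fintype V] (hc : IsCactus G) (s : Set V) (v : V) :
    bStar (G.induce s) ≤ bStar (G.induce (insert v s)) := by
  by_cases hv : v ∈ s
  · rw [insert_eq_of_mem hv]
  refine sSup_le_sSup_of_forall_exists_le ⟨_, fun k ⟨c, h⟩ => h.1.le_card⟩ fun k ⟨c, h⟩ => ?_
  obtain ⟨k', hk', c', h'⟩ := hc.exists_bStarColoring_insert hv h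
  exact ⟨k', ⟨c', h'⟩, hk'⟩

theorem cactus_z_and_bStar_monotonic [Fintype V] (G : SimpleGraph V) (hc : IsCactus G) :
    ∀ s₁ s₂ : Set V, s₂ ⊆ s₁ → s₂.Nonempty →
      zNum (G.induce s₂) ≤ zNum (G.induce s₁) ∧
      bStar (G.induce s₂) ≤ bStar (G.induce s₁) := by
  intro s₁ s₂ hs _
  exact ⟨le_of_subset_of_forall_le_insert hc.zNum_induce_le_insert hs,
    le_of_subset_of_forall_le_insert hc.bStar_induce_le_insert hs⟩
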